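/- arXiv:1611.08158 — 2 statements merged into one kernel-verified Lean document; each statement's English description precedes it below -/
import Mathlib

section
/- Let ζ > 0, η > 0 with [ζ−η, ζ+η] ⊂ (0, +∞), let N ≥ 1 be an integer, and let B ∈ C^∞([ζ−η, ζ+η]) with B not identically zero. Consider the time-varying linear control system on [ζ−η, ζ+η]: ẋ₁ = x₂, ẋ₂ = −((N−1)/t) x₂ + ξ(t), ẋ₃ = x₄, ẋ₄ = −3B(t)² x₁ − ((N−1)/t) x₄, with state x ∈ ℝ⁴ and scalar control ξ. Then this system is controllable on [ζ−η, ζ+η]: for every X ∈ ℝ⁴ there exists ξ ∈ L^∞(ζ−η, ζ+η) such that the solution with x(ζ−η) = 0 satisfies x(ζ+η) = X. -/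
open Set Matrix

set_option maxHeartbeats 4000000 in
theorem stmt4 (N : ℕ) (hN : 1 ≤ N) (ζ η : ℝ) (hη : 0 < η) (hζη : 0 < ζ - η)
    (B : ℝ → ℝ) (hB : ContDiffOn ℝ (⊤ : ℕ∞) B (Icc (ζ - η) (ζ + η)))
    (hBne : ∃ t ∈ Icc (ζ - η) (ζ + η), B t ≠ 0) :
    ∀ X : Fin 4 → ℝ, ∃ ξ : ℝ → ℝ,
      (∃ M : ℝ, ∀ t ∈ Icc (ζ - η) (ζ + η), |ξ t| ≤ M) ∧
      ∃ x : ℝ → Fin 4 → ℝ, x (ζ - η) = 0 ∧ x (ζ + η) = X ∧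
        ∀ t ∈ Icc (ζ - η) (ζ + η),
          HasDerivAt x
            ((Matrix.of ![![0, 1, 0, 0],
                ![0, -(((N : ℝ) - 1) / t), 0, 0],
                ![0, 0, 0, 1],
                ![-(3 * B t ^ 2), 0, 0, -(((N : ℝ) - 1) / t)]]).mulVec (x t)
              + ξ t • ![0, 1, 0, 0]) t := by
  intro X
  set L : ℝ := ζ - η with hLdef
  set T : ℝ := ζ + η with hTdef
  have hL0 : 0 < L := hζη
  have hLT : L < T := by simp only [hLdef, hTdef]; linarith
  have hLE : L ≤ T := hLT.le
  have hT0 : 0 < T := lt_trans hL0 hLT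
  -- continuous extension of B
  set Bt : ℝ → ℝ := fun t => B ↑(Set.projIcc L T hLE t) with hBtdef
  have hBtc : Continuous Bt := by
    apply hB.continuousOn.comp_continuous
      (continuous_subtype_val.comp continuous_projIcc)
    exact fun x => (Set.projIcc L T hLE x).2
  have hBt_eq : ∀ t ∈ Icc L T, Bt t = B t := by
    intro t ht
    simp only [hBtdef, Set.projIcc_of_mem hLE ht]
  -- find interval where Bt ≠ 0 inside Ioo L T
  obtain ⟨t0, ht0, hBt0⟩ := hBne
  have hBt0' : Bt t0 ≠ 0 := by rw [hBt_eq t0 ht0]; exact hBt0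
  have hopen : IsOpen ({t : ℝ | Bt t ≠ 0} ∩ Ioo L T) :=
    (isOpen_ne.preimage hBtc).inter isOpen_Ioo
  have hne : ({t : ℝ | Bt t ≠ 0} ∩ Ioo L T).Nonempty := by
    have ht0c : t0 ∈ closure (Ioo L T) := by
      rw [closure_Ioo hLT.ne]; exact ht0
    have := (mem_closure_iff.mp ht0c) {t : ℝ | Bt t ≠ 0}
      (isOpen_ne.preimage hBtc) hBt0'
    obtain ⟨y, hy1, hy2⟩ := this
    exact ⟨y, hy1, hy2⟩
  obtain ⟨t1, ht1⟩ := hne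
  obtain ⟨ε, hε, hball⟩ := Metric.isOpen_iff.mp hopen t1 ht1
  have hb1 : L < t1 - ε/2 := by
    have : t1 - ε/2 ∈ Metric.ball t1 ε := by
      simp only [Metric.mem_ball, Real.dist_eq]
      rw [show t1 - ε/2 - t1 = -(ε/2) by ring, abs_neg, abs_of_pos (by linarith)]
      linarith
    exact (hball this).2.1
  have hb2 : t1 + ε/2 < T := by
    have : t1 + ε/2 ∈ Metric.ball t1 ε := by
      simp only [Metric.mem_ball, Real.dist_eq]
      rw [show t1 + ε/2 - t1 = ε/2 by ring, abs_of_pos (by linarith)]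
      linarith
    exact (hball this).2.2
  -- bumps
  set bm1 : ContDiffBump (t1 - ε/4) := ⟨ε/16, ε/8, by linarith, by linarith⟩ with hbm1def
  set bm2 : ContDiffBump (t1 + ε/4) := ⟨ε/16, ε/8, by linarith, by linarith⟩ with hbm2def
  set φ1 : ℝ → ℝ := ⇑bm1 with hφ1def
  set φ2 : ℝ → ℝ := ⇑bm2 with hφ2def
  set q1 : ℝ := t1 - ε/8 with hq1def
  set q2 : ℝ := t1 + ε/8 with hq2def
  have hLq1 : L < q1 := by simp only [hq1def]; linarith
  have hq1q2 : q1 < q2 := by simp only [hq1def, hq2def]; linarith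
  have hq2T : q2 < T := by simp only [hq2def]; linarith
  -- bump vanishing helper
  have hφzero : ∀ (p : ℝ) (bm : ContDiffBump p) (s : ℝ), bm.rOut ≤ |s - p| → bm s = 0 := by
    intro p bm s h
    apply Function.notMem_support.mp
    rw [bm.support_eq]
    simp only [Metric.mem_ball, Real.dist_eq, not_lt]
    exact h
  have hφ1z : ∀ s : ℝ, q1 ≤ s → φ1 s = 0 := by
    intro s hs
    apply hφzero
    show (ε/8 : ℝ) ≤ |s - (t1 - ε/4)|
    rw [abs_of_nonneg (by simp only [hq1def] at hs; linarith)]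
    simp only [hq1def] at hs; linarith
  have hφ1z' : ∀ s : ℝ, s ≤ t1 - 3*ε/8 → φ1 s = 0 := by
    intro s hs
    apply hφzero
    show (ε/8 : ℝ) ≤ |s - (t1 - ε/4)|
    rw [abs_of_nonpos (by linarith)]
    linarith
  have hφ2z : ∀ s : ℝ, s ≤ q2 → φ2 s = 0 := by
    intro s hs
    apply hφzero
    show (ε/8 : ℝ) ≤ |s - (t1 + ε/4)|
    rw [abs_of_nonpos (by simp only [hq2def] at hs; linarith)]
    simp only [hq2def] at hs; linarith
  have hφ2z' : ∀ s : ℝ, t1 + 3*ε/8 ≤ s → φ2 s = 0 := by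
    intro s hs
    apply hφzero
    show (ε/8 : ℝ) ≤ |s - (t1 + ε/4)|
    rw [abs_of_nonneg (by linarith)]
    linarith
  have hφ1c : Continuous φ1 := bm1.continuous
  have hφ2c : Continuous φ2 := bm2.continuous
  -- Hermite data
  set σ : ℝ := T - L with hσdef
  have hσ0 : 0 < σ := by simp only [hσdef]; linarith
  set st : ℝ → ℝ := fun t => (t - L) * σ⁻¹ with hstdef
  have hstL : st L = 0 := by simp [hstdef]
  have hstT : st T = 1 := by
    simp only [hstdef, ← hσdef]
    exact mul_inv_cancel₀ hσ0.ne'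
  have hst : ∀ t, HasDerivAt st σ⁻¹ t := by
    intro t
    simpa using ((hasDerivAt_id t).sub_const L).mul_const σ⁻¹
  set ψ : ℝ → ℝ := fun t => X 0 * (3*(st t)^2 - 2*(st t)^3) + X 1 * σ * ((st t)^3 - (st t)^2) with hψdef
  set ψd : ℝ → ℝ := fun t => (X 0 * (6*(st t) - 6*(st t)^2) + X 1 * σ * (3*(st t)^2 - 2*(st t))) * σ⁻¹ with hψddef
  set ψdd : ℝ → ℝ := fun t => (X 0 * (6 - 12*(st t)) + X 1 * σ * (6*(st t) - 2)) * σ⁻¹ * σ⁻¹ with hψdddef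
  have hstc : Continuous st := by rw [hstdef]; fun_prop
  have hψc : Continuous ψ := by rw [hψdef]; fun_prop
  have hψdc : Continuous ψd := by rw [hψddef]; fun_prop
  have hψddc : Continuous ψdd := by rw [hψdddef]; fun_prop
  have hψ : ∀ t, HasDerivAt ψ (ψd t) t := by
    intro t
    have h2 : HasDerivAt (fun t => st t ^ 2) (2 * st t * σ⁻¹) t := by
      simpa using (hst t).fun_pow 2
    have h3 : HasDerivAt (fun t => st t ^ 3) (3 * st t ^ 2 * σ⁻¹) t := by
      simpa using (hst t).fun_pow 3
    have h := (((h2.const_mul (3:ℝ)).sub (h3.const_mul (2:ℝ))).const_mul (X 0)).add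
      ((h3.sub h2).const_mul (X 1 * σ))
    refine h.congr_deriv ?_
    simp only [hψddef]; ring
  have hψd : ∀ t, HasDerivAt ψd (ψdd t) t := by
    intro t
    have h2 : HasDerivAt (fun t => st t ^ 2) (2 * st t * σ⁻¹) t := by
      simpa using (hst t).fun_pow 2
    have h := ((((hst t).const_mul (6:ℝ)).sub (h2.const_mul (6:ℝ))).const_mul (X 0)).add
      (((h2.const_mul (3:ℝ)).sub ((hst t).const_mul (2:ℝ))).const_mul (X 1 * σ))
    have h' := h.mul_const σ⁻¹
    refine h'.congr_deriv ?_
    simp only [hψdddef]; ring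
  have hψL : ψ L = 0 := by simp [hψdef, hstL]
  have hψT : ψ T = X 0 := by simp [hψdef, hstT]; ring
  have hψdL : ψd L = 0 := by simp [hψddef, hstL]
  have hψdT : ψd T = X 1 := by
    simp only [hψddef, hstT]
    field_simp
    ring
  -- weight functions
  set w : ℝ → ℝ := fun s => 3 * Bt s ^ 2 * s ^ (N - 1) with hwdef
  have hwc : Continuous w := by rw [hwdef]; fun_prop
  have hw_nonneg : ∀ s : ℝ, 0 ≤ s → 0 ≤ w s := by
    intro s hs
    simp only [hwdef]
    positivity
  have hw_pos : ∀ s ∈ Metric.ball t1 ε, 0 < w s := by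
    intro s hs
    obtain ⟨hBs, hIoo⟩ := hball hs
    have hs0 : 0 < s := lt_trans hL0 hIoo.1
    simp only [hwdef]
    have h1 : 0 < Bt s ^ 2 := pow_two_pos_of_ne_zero hBs
    have h2 : 0 < s ^ (N - 1) := pow_pos hs0 _
    positivity
  set ν : ℝ → ℝ := fun t => t ^ ((1:ℤ) - N) with hνdef
  have hν_pos : ∀ t : ℝ, 0 < t → 0 < ν t := by
    intro t ht; simp only [hνdef]; exact zpow_pos ht _
  have hνC : ∀ t : ℝ, t ≠ 0 → ContinuousAt ν t := by
    intro t ht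
    simp only [hνdef]
    exact continuousAt_zpow₀ t _ (Or.inl ht)
  -- FTC helper
  have hFTC : ∀ (h : ℝ → ℝ), Continuous h → ∀ (a t : ℝ),
      HasDerivAt (fun u => ∫ s in a..u, h s) (h t) t := by
    intro h hh a t
    exact intervalIntegral.integral_hasDerivAt_right (hh.intervalIntegrable a t)
      (ContinuousOn.stronglyMeasurableAtFilter isOpen_univ hh.continuousOn t (mem_univ t))
      hh.continuousAt
  -- interval integrability of ν-products on subintervals of [L,T]
  have hνint : ∀ (h : ℝ → ℝ), Continuous h → ∀ a b : ℝ, L ≤ a → a ≤ b → b ≤ T →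
      IntervalIntegrable (fun t => ν t * h t) MeasureTheory.volume a b := by
    intro h hh a b hLa hab hbT
    apply ContinuousOn.intervalIntegrable
    intro t ht
    rw [uIcc_of_le hab] at ht
    have ht0 : 0 < t := lt_of_lt_of_le hL0 (le_trans hLa ht.1)
    exact ((hνC t ht0.ne').mul hh.continuousAt).continuousWithinAt
  -- the integral quantities
  set G1 : ℝ → ℝ := fun t => ∫ s in L..t, w s * φ1 s with hG1def
  set G2 : ℝ → ℝ := fun t => ∫ s in L..t, w s * φ2 s with hG2def
  set gψ : ℝ → ℝ := fun t => ∫ s in L..t, w s * ψ s with hgψdef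
  set A1 : ℝ := G1 T with hA1def
  set A2 : ℝ := G2 T with hA2def
  set Pg : ℝ := gψ T with hPgdef
  have hG1der : ∀ t, HasDerivAt G1 (w t * φ1 t) t := hFTC _ (hwc.mul hφ1c) L
  have hG2der : ∀ t, HasDerivAt G2 (w t * φ2 t) t := hFTC _ (hwc.mul hφ2c) L
  have hgψder : ∀ t, HasDerivAt gψ (w t * ψ t) t := hFTC _ (hwc.mul hψc) L
  have hG1c : Continuous G1 := continuous_iff_continuousAt.mpr fun t => (hG1der t).continuousAt
  have hG2c : Continuous G2 := continuous_iff_continuousAt.mpr fun t => (hG2der t).continuousAt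
  have hgψc : Continuous gψ := continuous_iff_continuousAt.mpr fun t => (hgψder t).continuousAt
  -- positivity of A1 A2
  have hApos : ∀ (p : ℝ) (bm : ContDiffBump p), bm.rIn = ε/16 → bm.rOut = ε/8 →
      Metric.closedBall p bm.rOut ⊆ Metric.ball t1 ε →
      0 < ∫ s in L..T, w s * bm s := by
    intro p bm hrIn hrOut hsub
    have hmemp : p ∈ Metric.ball t1 ε := hsub (Metric.mem_closedBall_self (by rw [hrOut]; linarith))
    have hpIoo : p ∈ Ioo L T := (hball hmemp).2
    have hab1 : L < p - ε/16 := by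
      have : p - ε/16 ∈ Metric.closedBall p bm.rOut := by
        simp only [Metric.mem_closedBall, Real.dist_eq, hrOut]
        rw [show p - ε/16 - p = -(ε/16) by ring, abs_neg, abs_of_pos (by linarith)]
        linarith
      exact ((hball (hsub this)).2).1
    have hab2 : p + ε/16 < T := by
      have : p + ε/16 ∈ Metric.closedBall p bm.rOut := by
        simp only [Metric.mem_closedBall, Real.dist_eq, hrOut]
        rw [show p + ε/16 - p = ε/16 by ring, abs_of_pos (by linarith)]
        linarith
      exact ((hball (hsub this)).2).2
    have hint : ∀ a b : ℝ, IntervalIntegrable (fun s => w s * bm s) MeasureTheory.volume a b :=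
      fun a b => (hwc.mul bm.continuous).intervalIntegrable a b
    rw [← intervalIntegral.integral_add_adjacent_intervals (hint L (p - ε/16)) (hint (p - ε/16) T),
        ← intervalIntegral.integral_add_adjacent_intervals (hint (p - ε/16) (p + ε/16)) (hint (p + ε/16) T)]
    have h1 : 0 ≤ ∫ s in L..(p - ε/16), w s * bm s := by
      apply intervalIntegral.integral_nonneg (by linarith)
      intro u hu
      exact mul_nonneg (hw_nonneg u (le_trans hL0.le hu.1)) bm.nonneg
    have h3 : 0 ≤ ∫ s in (p + ε/16)..T, w s * bm s := by
      apply intervalIntegral.integral_nonneg (by linarith)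
      intro u hu
      exact mul_nonneg (hw_nonneg u (by linarith [hu.1, hpIoo.1, hL0])) bm.nonneg
    have h2 : 0 < ∫ s in (p - ε/16)..(p + ε/16), w s * bm s := by
      apply intervalIntegral.intervalIntegral_pos_of_pos_on (hint _ _)
      · intro s hs
        have hs1 : bm s = 1 := by
          apply bm.one_of_mem_closedBall
          simp only [Metric.mem_closedBall, Real.dist_eq, hrIn]
          rw [abs_le]; constructor <;> [linarith [hs.1]; linarith [hs.2]]
        rw [hs1, mul_one]
        apply hw_pos
        apply hsub
        simp only [Metric.mem_closedBall, Real.dist_eq, hrOut]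
        rw [abs_le]; constructor <;> [linarith [hs.1]; linarith [hs.2]]
      · linarith
    linarith
  have hA1pos : 0 < A1 := by
    rw [hA1def, hG1def]
    apply hApos _ bm1 rfl rfl
    intro s hs
    simp only [Metric.mem_closedBall, Real.dist_eq] at hs
    simp only [Metric.mem_ball, Real.dist_eq]
    rw [abs_le] at hs
    rw [abs_lt]; constructor <;> [linarith [hs.1]; linarith [hs.2]]
  have hA2pos : 0 < A2 := by
    rw [hA2def, hG2def]
    apply hApos _ bm2 rfl rfl
    intro s hs
    simp only [Metric.mem_closedBall, Real.dist_eq] at hs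
    simp only [Metric.mem_ball, Real.dist_eq]
    rw [abs_le] at hs
    rw [abs_lt]; constructor <;> [linarith [hs.1]; linarith [hs.2]]
  -- G-structure facts
  have hintφ1 : ∀ a b : ℝ, IntervalIntegrable (fun s => w s * φ1 s) MeasureTheory.volume a b :=
    fun a b => (hwc.mul hφ1c).intervalIntegrable a b
  have hintφ2 : ∀ a b : ℝ, IntervalIntegrable (fun s => w s * φ2 s) MeasureTheory.volume a b :=
    fun a b => (hwc.mul hφ2c).intervalIntegrable a b
  have hG1eq : ∀ t : ℝ, q1 ≤ t → t ≤ T → G1 t = A1 := by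
    intro t hq1t htT
    have hzero : (∫ s in t..T, w s * φ1 s) = 0 := by
      rw [intervalIntegral.integral_congr (g := fun _ => (0:ℝ))]
      · simp
      · intro s hs
        rw [uIcc_of_le htT] at hs
        simp [hφ1z s (le_trans hq1t hs.1)]
    have key := intervalIntegral.integral_add_adjacent_intervals (hintφ1 L t) (hintφ1 t T)
    simp only [hG1def, hA1def] at key ⊢
    linarith [key, hzero]
  have hG2eq0 : ∀ t : ℝ, L ≤ t → t ≤ q2 → G2 t = 0 := by
    intro t hLt htq2
    simp only [hG2def]
    rw [intervalIntegral.integral_congr (g := fun _ => (0:ℝ))]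
    · simp
    · intro s hs
      rw [uIcc_of_le hLt] at hs
      simp [hφ2z s (le_trans hs.2 htq2)]
  have hG1nonneg : ∀ t : ℝ, L ≤ t → 0 ≤ G1 t := by
    intro t hLt
    apply intervalIntegral.integral_nonneg hLt
    intro u hu
    exact mul_nonneg (hw_nonneg u (le_trans hL0.le hu.1)) bm1.nonneg
  have hG2le : ∀ t : ℝ, L ≤ t → t ≤ T → G2 t ≤ A2 := by
    intro t hLt htT
    have h3 : 0 ≤ ∫ s in t..T, w s * φ2 s := by
      apply intervalIntegral.integral_nonneg htT
      intro u hu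
      exact mul_nonneg (hw_nonneg u (le_trans hL0.le (le_trans hLt hu.1))) bm2.nonneg
    have key := intervalIntegral.integral_add_adjacent_intervals (hintφ2 L t) (hintφ2 t T)
    simp only [hG2def, hA2def] at key ⊢
    linarith [key, h3]
  -- positivity of the determinant integral
  set D : ℝ := ∫ t in L..T, ν t * (A2 * G1 t - A1 * G2 t) with hDdef
  have hDc : Continuous (fun t => A2 * G1 t - A1 * G2 t) := by fun_prop
  have hDpos : 0 < D := by
    have hi : ∀ a b : ℝ, L ≤ a → a ≤ b → b ≤ T →
        IntervalIntegrable (fun t => ν t * (A2 * G1 t - A1 * G2 t)) MeasureTheory.volume a b :=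
      fun a b h1 h2 h3 => hνint _ hDc a b h1 h2 h3
    rw [hDdef,
      ← intervalIntegral.integral_add_adjacent_intervals (hi L q1 le_rfl hLq1.le (by linarith))
        (hi q1 T hLq1.le (by linarith) le_rfl),
      ← intervalIntegral.integral_add_adjacent_intervals (hi q1 q2 hLq1.le hq1q2.le hq2T.le)
        (hi q2 T (by linarith) hq2T.le le_rfl)]
    have hp1 : 0 ≤ ∫ t in L..q1, ν t * (A2 * G1 t - A1 * G2 t) := by
      apply intervalIntegral.integral_nonneg hLq1.le
      intro u hu
      have hu0 : 0 < u := lt_of_lt_of_le hL0 hu.1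
      rw [hG2eq0 u hu.1 (by linarith [hu.2]), mul_zero, sub_zero]
      exact mul_nonneg (hν_pos u hu0).le (mul_nonneg hA2pos.le (hG1nonneg u hu.1))
    have hp2 : 0 < ∫ t in q1..q2, ν t * (A2 * G1 t - A1 * G2 t) := by
      apply intervalIntegral.intervalIntegral_pos_of_pos_on
        (hi q1 q2 hLq1.le hq1q2.le hq2T.le)
      · intro u hu
        have hu0 : 0 < u := lt_of_lt_of_le hL0 (by linarith [hu.1, hLq1])
        rw [hG1eq u hu.1.le (by linarith [hu.2, hq2T]), hG2eq0 u (by linarith [hu.1, hLq1]) hu.2.le,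
          mul_zero, sub_zero]
        exact mul_pos (hν_pos u hu0) (mul_pos hA2pos hA1pos)
      · exact hq1q2
    have hp3 : 0 ≤ ∫ t in q2..T, ν t * (A2 * G1 t - A1 * G2 t) := by
      apply intervalIntegral.integral_nonneg hq2T.le
      intro u hu
      have hu0 : 0 < u := lt_of_lt_of_le hL0 (by linarith [hu.1, hLq1, hq1q2])
      rw [hG1eq u (by linarith [hu.1, hq1q2]) hu.2]
      have h2 := hG2le u (by linarith [hu.1, hLq1, hq1q2]) hu.2
      have e : A2 * A1 - A1 * G2 u = A1 * (A2 - G2 u) := by ring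
      rw [e]
      exact mul_nonneg (hν_pos u hu0).le (mul_nonneg hA1pos.le (by linarith))
    linarith
  -- linear system
  set S1 : ℝ := -∫ t in L..T, ν t * G1 t with hS1def
  set S2 : ℝ := -∫ t in L..T, ν t * G2 t with hS2def
  set Pξ : ℝ := -∫ t in L..T, ν t * gψ t with hPξdef
  set Q1 : ℝ := -(ν T * A1) with hQ1def
  set Q2 : ℝ := -(ν T * A2) with hQ2def
  set bb1 : ℝ := X 3 + ν T * Pg with hbb1def
  set bb2 : ℝ := X 2 - Pξ with hbb2def
  set det : ℝ := Q1 * S2 - Q2 * S1 with hdetdef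
  have hdet : det = -(ν T) * D := by
    have e1 : D = A2 * (∫ t in L..T, ν t * G1 t) - A1 * (∫ t in L..T, ν t * G2 t) := by
      rw [hDdef, ← intervalIntegral.integral_const_mul, ← intervalIntegral.integral_const_mul,
        ← intervalIntegral.integral_sub
          ((hνint _ hG1c L T le_rfl hLE le_rfl).const_mul A2)
          ((hνint _ hG2c L T le_rfl hLE le_rfl).const_mul A1)]
      apply intervalIntegral.integral_congr
      intro s _
      ring
    rw [hdetdef, hQ1def, hQ2def, hS1def, hS2def, e1]
    ring
  have hdetne : det ≠ 0 := by
    rw [hdet, neg_mul]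
    exact (neg_lt_zero.mpr (mul_pos (hν_pos T hT0) hDpos)).ne
  set c1 : ℝ := (bb1 * S2 - bb2 * Q2) / det with hc1def
  set c2 : ℝ := (Q1 * bb2 - S1 * bb1) / det with hc2def
  have heq1 : Q1 * c1 + Q2 * c2 = bb1 := by
    rw [hc1def, hc2def]
    field_simp
    rw [hdetdef]
    ring
  have heq2 : S1 * c1 + S2 * c2 = bb2 := by
    rw [hc1def, hc2def]
    field_simp
    rw [hdetdef]
    ring
  -- the trajectory
  set x1 : ℝ → ℝ := fun t => ψ t + c1 * φ1 t + c2 * φ2 t with hx1def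
  set x2 : ℝ → ℝ := fun t => ψd t + c1 * deriv φ1 t + c2 * deriv φ2 t with hx2def
  set x2d : ℝ → ℝ := fun t => ψdd t + c1 * deriv (deriv φ1) t + c2 * deriv (deriv φ2) t with hx2ddef
  have hφ1smooth := bm1.contDiff (n := (⊤ : ℕ∞))
  have hφ2smooth := bm2.contDiff (n := (⊤ : ℕ∞))
  have hφ1d1 : Differentiable ℝ φ1 := hφ1smooth.differentiable (by simp)
  have hφ2d1 : Differentiable ℝ φ2 := hφ2smooth.differentiable (by simp)
  have hφ1ds : ContDiff ℝ (⊤:ℕ∞) (deriv φ1) := (contDiff_infty_iff_deriv.mp hφ1smooth).2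
  have hφ2ds : ContDiff ℝ (⊤:ℕ∞) (deriv φ2) := (contDiff_infty_iff_deriv.mp hφ2smooth).2
  have hφ1d2 : Differentiable ℝ (deriv φ1) := hφ1ds.differentiable (by simp)
  have hφ2d2 : Differentiable ℝ (deriv φ2) := hφ2ds.differentiable (by simp)
  have hφ1dd_c : Continuous (deriv (deriv φ1)) :=
    ((contDiff_infty_iff_deriv.mp hφ1ds).2).continuous
  have hφ2dd_c : Continuous (deriv (deriv φ2)) :=
    ((contDiff_infty_iff_deriv.mp hφ2ds).2).continuous
  have hx1der : ∀ t, HasDerivAt x1 (x2 t) t := by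
    intro t
    exact ((hψ t).add (((hφ1d1 t).hasDerivAt).const_mul c1)).add
      (((hφ2d1 t).hasDerivAt).const_mul c2)
  have hx2der : ∀ t, HasDerivAt x2 (x2d t) t := by
    intro t
    exact ((hψd t).add (((hφ1d2 t).hasDerivAt).const_mul c1)).add
      (((hφ2d2 t).hasDerivAt).const_mul c2)
  have hx1c : Continuous x1 := continuous_iff_continuousAt.mpr fun t => (hx1der t).continuousAt
  have hx2c : Continuous x2 := continuous_iff_continuousAt.mpr fun t => (hx2der t).continuousAt
  have hx2dc : Continuous x2d := by
    rw [hx2ddef]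
    exact (hψddc.add (continuous_const.mul hφ1dd_c)).add (continuous_const.mul hφ2dd_c)
  -- deriv of bumps vanishes near L and T
  have hderivz : ∀ (p : ℝ) (bm : ContDiffBump p) (s : ℝ),
      s < p - bm.rOut ∨ p + bm.rOut < s → deriv (⇑bm) s = 0 := by
    intro p bm s hs
    have hev : (⇑bm : ℝ → ℝ) =ᶠ[nhds s] (fun _ => (0:ℝ)) := by
      rcases hs with h | h
      · apply Filter.eventuallyEq_of_mem (Iio_mem_nhds h)
        intro u hu
        apply hφzero
        rw [abs_of_nonpos (by simp only [mem_Iio] at hu; linarith [bm.rOut_pos])]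
        simp only [mem_Iio] at hu; linarith
      · apply Filter.eventuallyEq_of_mem (Ioi_mem_nhds h)
        intro u hu
        apply hφzero
        rw [abs_of_nonneg (by simp only [mem_Ioi] at hu; linarith [bm.rOut_pos])]
        simp only [mem_Ioi] at hu; linarith
    rw [hev.deriv_eq]
    exact deriv_const s 0
  have hφ1L : φ1 L = 0 := hφ1z' L (by linarith)
  have hφ2L : φ2 L = 0 := hφ2z L (by simp only [hq2def]; linarith)
  have hφ1T : φ1 T = 0 := hφ1z T (by simp only [hq1def]; linarith)
  have hφ2T : φ2 T = 0 := hφ2z' T (by linarith)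
  have hdφ1L : deriv φ1 L = 0 := hderivz _ bm1 L (Or.inl (by show L < t1 - ε/4 - ε/8; linarith))
  have hdφ2L : deriv φ2 L = 0 := hderivz _ bm2 L (Or.inl (by show L < t1 + ε/4 - ε/8; linarith))
  have hdφ1T : deriv φ1 T = 0 := hderivz _ bm1 T (Or.inr (by show t1 - ε/4 + ε/8 < T; linarith))
  have hdφ2T : deriv φ2 T = 0 := hderivz _ bm2 T (Or.inr (by show t1 + ε/4 + ε/8 < T; linarith))
  -- x3, x4
  set f : ℝ → ℝ := fun s => w s * x1 s with hfdef
  have hfc : Continuous f := hwc.mul hx1c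
  set g : ℝ → ℝ := fun t => ∫ s in L..t, f s with hgdef
  have hgder : ∀ t, HasDerivAt g (f t) t := hFTC _ hfc L
  have hgc : Continuous g := continuous_iff_continuousAt.mpr fun t => (hgder t).continuousAt
  set x4 : ℝ → ℝ := fun t => -(ν t * g t) with hx4def
  have hx4at : ∀ t : ℝ, 0 < t → ContinuousAt x4 t := by
    intro t ht
    exact (((hνC t ht.ne').mul (hgder t).continuousAt).neg)
  set x3 : ℝ → ℝ := fun t => ∫ s in L..t, x4 s with hx3def
  -- g splits
  have hgsplit : ∀ t : ℝ, g t = gψ t + c1 * G1 t + c2 * G2 t := by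
    intro t
    have i1 : IntervalIntegrable (fun s => w s * ψ s) MeasureTheory.volume L t :=
      (hwc.mul hψc).intervalIntegrable L t
    have i2 : IntervalIntegrable (fun s => c1 * (w s * φ1 s)) MeasureTheory.volume L t :=
      ((hwc.mul hφ1c).intervalIntegrable L t).const_mul c1
    have i3 : IntervalIntegrable (fun s => c2 * (w s * φ2 s)) MeasureTheory.volume L t :=
      ((hwc.mul hφ2c).intervalIntegrable L t).const_mul c2
    rw [hgdef, hgψdef, hG1def, hG2def]
    calc (∫ s in L..t, f s)
        = ∫ s in L..t, (w s * ψ s + c1 * (w s * φ1 s) + c2 * (w s * φ2 s)) := by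
          apply intervalIntegral.integral_congr
          intro s _
          simp only [hfdef, hx1def]
          ring
      _ = (∫ s in L..t, w s * ψ s) + (∫ s in L..t, c1 * (w s * φ1 s))
            + (∫ s in L..t, c2 * (w s * φ2 s)) := by
          rw [intervalIntegral.integral_add (i1.add i2) i3,
            intervalIntegral.integral_add i1 i2]
      _ = _ := by
          rw [intervalIntegral.integral_const_mul, intervalIntegral.integral_const_mul]
  -- the control
  set ξ : ℝ → ℝ := fun t => x2d t + (((N:ℝ) - 1) / t) * x2 t with hξdef
  refine ⟨ξ, ?_, fun t => ![x1 t, x2 t, x3 t, x4 t], ?_, ?_, ?_⟩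
  · -- boundedness
    have hcont : ContinuousOn ξ (Icc L T) := by
      rw [hξdef]
      apply ContinuousOn.add hx2dc.continuousOn
      apply ContinuousOn.mul
      · apply ContinuousOn.div continuousOn_const continuousOn_id
        intro t ht
        exact ne_of_gt (lt_of_lt_of_le hL0 ht.1)
      · exact hx2c.continuousOn
    obtain ⟨M, hM⟩ := isCompact_Icc.exists_bound_of_continuousOn hcont
    exact ⟨M, fun t ht => by simpa [Real.norm_eq_abs] using hM t ht⟩
  · -- initial condition
    funext i
    fin_cases i
    · show x1 L = 0
      simp [hx1def, hψL, hφ1L, hφ2L]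
    · show x2 L = 0
      simp [hx2def, hψdL, hdφ1L, hdφ2L]
    · show x3 L = 0
      simp [hx3def]
    · show x4 L = 0
      simp [hx4def, hgdef]
  · -- final condition
    have hx4T : x4 T = X 3 := by
      have hQ : Q1 * c1 + Q2 * c2 = bb1 := heq1
      rw [hQ1def, hQ2def, hbb1def, hA1def, hA2def, hPgdef] at hQ
      simp only [hx4def]
      rw [hgsplit T]
      linear_combination hQ
    have hx3T : x3 T = X 2 := by
      rw [hx3def]
      simp only
      have e : (∫ s in L..T, x4 s)
          = (-∫ t in L..T, ν t * gψ t) + c1 * (-∫ t in L..T, ν t * G1 t)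
            + c2 * (-∫ t in L..T, ν t * G2 t) := by
        have i1 : IntervalIntegrable (fun t => -(ν t * gψ t)) MeasureTheory.volume L T :=
          (hνint _ hgψc L T le_rfl hLE le_rfl).neg
        have i2 : IntervalIntegrable (fun t => c1 * -(ν t * G1 t)) MeasureTheory.volume L T :=
          ((hνint _ hG1c L T le_rfl hLE le_rfl).neg).const_mul c1
        have i3 : IntervalIntegrable (fun t => c2 * -(ν t * G2 t)) MeasureTheory.volume L T :=
          ((hνint _ hG2c L T le_rfl hLE le_rfl).neg).const_mul c2
        calc (∫ s in L..T, x4 s)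
            = ∫ s in L..T, (-(ν s * gψ s) + c1 * -(ν s * G1 s) + c2 * -(ν s * G2 s)) := by
              apply intervalIntegral.integral_congr
              intro s _
              rw [hx4def]
              simp only
              rw [hgsplit s]
              ring
          _ = (∫ s in L..T, -(ν s * gψ s)) + (∫ s in L..T, c1 * -(ν s * G1 s))
                + (∫ s in L..T, c2 * -(ν s * G2 s)) := by
              rw [intervalIntegral.integral_add (i1.add i2) i3,
                intervalIntegral.integral_add i1 i2]
          _ = _ := by
              rw [intervalIntegral.integral_const_mul, intervalIntegral.integral_const_mul,
                intervalIntegral.integral_neg, intervalIntegral.integral_neg,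
                intervalIntegral.integral_neg]
      rw [e, ← hPξdef, ← hS1def, ← hS2def]
      have : S1 * c1 + S2 * c2 = bb2 := heq2
      rw [hbb2def] at this
      linarith
    funext i
    fin_cases i
    · show x1 T = X 0
      simp [hx1def, hψT, hφ1T, hφ2T]
    · show x2 T = X 1
      simp [hx2def, hψdT, hdφ1T, hdφ2T]
    · exact hx3T
    · exact hx4T
  · -- the ODE
    intro t ht
    have ht0 : 0 < t := lt_of_lt_of_le hL0 ht.1
    have hx3der : HasDerivAt x3 (x4 t) t := by
      rw [hx3def]
      apply intervalIntegral.integral_hasDerivAt_right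
      · apply ContinuousOn.intervalIntegrable
        intro s hs
        rw [uIcc_of_le ht.1] at hs
        exact (hx4at s (lt_of_lt_of_le hL0 hs.1)).continuousWithinAt
      · exact ContinuousOn.stronglyMeasurableAtFilter (isOpen_Ioi (a := (0:ℝ)))
          (fun s hs => (hx4at s hs).continuousWithinAt) t ht0
      · exact hx4at t ht0
    have hx4der : HasDerivAt x4 (-(3 * B t ^ 2 * x1 t) - (((N:ℝ) - 1) / t) * x4 t) t := by
      have hνder : HasDerivAt ν ((1 - (N:ℝ)) * t ^ (-(N:ℤ))) t := by
        have := hasDerivAt_zpow ((1:ℤ) - N) t (Or.inl ht0.ne')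
        simp only [hνdef]
        refine this.congr_deriv ?_
        push_cast
        ring_nf
      have h := ((hνder.mul (hgder t))).neg
      have e1 : ν t * (t:ℝ) ^ (N - 1) = 1 := by
        simp only [hνdef]
        rw [← zpow_natCast, ← zpow_add₀ ht0.ne']
        have hexp : (1:ℤ) - N + (N - 1 : ℕ) = 0 := by omega
        rw [hexp, zpow_zero]
      have e2 : t⁻¹ * ν t = t ^ (-(N:ℤ)) := by
        simp only [hνdef]
        rw [← _root_.zpow_neg_one, ← zpow_add₀ ht0.ne']
        congr 1
        omega
      refine h.congr_deriv ?_
      simp only [hfdef, hwdef, hx4def]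
      rw [hBt_eq t ht, div_eq_mul_inv]
      linear_combination -(3 * B t ^ 2 * x1 t) * e1 - (((N:ℝ) - 1) * g t) * e2
    rw [hasDerivAt_pi]
    intro i
    fin_cases i
    · show HasDerivAt (fun t => x1 t) _ t
      convert hx1der t using 1
      simp [Matrix.mulVec, dotProduct, Fin.sum_univ_four]
    · show HasDerivAt (fun t => x2 t) _ t
      convert hx2der t using 1
      simp only [Matrix.mulVec, dotProduct, Fin.sum_univ_four]
      simp [hξdef]
      ring
    · show HasDerivAt (fun t => x3 t) _ t
      convert hx3der using 1
      simp [Matrix.mulVec, dotProduct, Fin.sum_univ_four]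
    · show HasDerivAt (fun t => x4 t) _ t
      convert hx4der using 1
      simp [Matrix.mulVec, dotProduct, Fin.sum_univ_four]
      ring
end

section
/- Let I ⊂ ℝ be a compact interval, ρ ∈ ℝ, δ > 0 with [ρ−δ, ρ+δ] ⊂ ℝ, and let φ : I × [ρ−δ, ρ+δ] → ℝ be C^∞ such that φ(t, ρ) = 0, ∂_z φ(t, ρ) = 0, ∂²_{zz} φ(t, ρ) = 0 for all t ∈ I, and ∂³_{zzz} φ(t, z) > 0 for all (t, z) ∈ I × [ρ−δ, ρ+δ]. Then the function ψ(t, z) := (z − ρ) · ( (1/2) ∫₀¹ (1−s)² ∂³_{zzz} φ(t, ρ + s(z−ρ)) ds )^{1/3} is C^∞ on I × [ρ−δ, ρ+δ] and satisfies ψ(t, z)³ = φ(t, z) for all (t, z). -/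
open Set Filter MeasureTheory Topology
open scoped ENNReal NNReal

/-- derivative congruence on an open set -/
lemma derivCongrOn {f g : ℝ → ℝ} {O : Set ℝ} (hO : IsOpen O) (h : EqOn f g O) :
    EqOn (deriv f) (deriv g) O := fun _ hx =>
  Filter.EventuallyEq.deriv_eq (Filter.eventuallyEq_of_mem (hO.mem_nhds hx) h)

noncomputable def Xfun (φ : ℝ → ℝ → ℝ) (ρ : ℝ) (t z : ℝ) : ℝ :=
  (1/2) * ∫ s in (0:ℝ)..1, (1 - s) ^ 2 * deriv (deriv (deriv (φ t))) (ρ + s * (z - ρ))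

theorem stmt6_taylor (a b ρ δ : ℝ) (hδ : 0 < δ)
    (φ : ℝ → ℝ → ℝ)
    (hφ : ContDiffOn ℝ (⊤ : ℕ∞) (Function.uncurry φ) (Icc a b ×ˢ Icc (ρ - δ) (ρ + δ)))
    (h0 : ∀ t ∈ Icc a b, φ t ρ = 0)
    (h1 : ∀ t ∈ Icc a b, deriv (φ t) ρ = 0)
    (h2 : ∀ t ∈ Icc a b, deriv (deriv (φ t)) ρ = 0)
    (h3 : ∀ t ∈ Icc a b, ∀ z ∈ Icc (ρ - δ) (ρ + δ),
      0 < deriv (deriv (deriv (φ t))) z) :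
    ∀ t ∈ Icc a b, ∀ z ∈ Icc (ρ - δ) (ρ + δ),
      (z - ρ) ^ 3 * Xfun φ ρ t z = φ t z ∧ 0 < Xfun φ ρ t z := by
  intro t ht z hz
  have hcd : ρ - δ < ρ + δ := by linarith
  have hρJ : ρ ∈ Ioo (ρ - δ) (ρ + δ) := ⟨by linarith, by linarith⟩
  set f : ℝ → ℝ := φ t with hfdef
  -- slice smoothness
  have hsl : ContDiffOn ℝ (⊤ : ℕ∞) f (Icc (ρ - δ) (ρ + δ)) := by
    have hmap : MapsTo (fun z : ℝ => (t, z)) (Icc (ρ - δ) (ρ + δ))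
        (Icc a b ×ˢ Icc (ρ - δ) (ρ + δ)) := fun x hx => ⟨ht, hx⟩
    exact hφ.comp ((contDiff_const.prodMk contDiff_id).contDiffOn) hmap
  have hUD : UniqueDiffOn ℝ (Icc (ρ - δ) (ρ + δ)) := uniqueDiffOn_Icc hcd
  set W1 : ℝ → ℝ := derivWithin f (Icc (ρ - δ) (ρ + δ)) with hW1def
  set W2 : ℝ → ℝ := derivWithin W1 (Icc (ρ - δ) (ρ + δ)) with hW2def
  set W3 : ℝ → ℝ := derivWithin W2 (Icc (ρ - δ) (ρ + δ)) with hW3def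
  have hW1cd : ContDiffOn ℝ (⊤ : ℕ∞) W1 (Icc (ρ - δ) (ρ + δ)) := hsl.derivWithin hUD (by simp)
  have hW2cd : ContDiffOn ℝ (⊤ : ℕ∞) W2 (Icc (ρ - δ) (ρ + δ)) := hW1cd.derivWithin hUD (by simp)
  have hW3cd : ContDiffOn ℝ (⊤ : ℕ∞) W3 (Icc (ρ - δ) (ρ + δ)) := hW2cd.derivWithin hUD (by simp)
  have hW1eq : EqOn W1 (deriv f) (Ioo (ρ - δ) (ρ + δ)) := fun x hx =>
    derivWithin_of_mem_nhds (Icc_mem_nhds hx.1 hx.2)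
  have hW2eq : EqOn W2 (deriv (deriv f)) (Ioo (ρ - δ) (ρ + δ)) := fun x hx => by
    have : W2 x = deriv W1 x := derivWithin_of_mem_nhds (Icc_mem_nhds hx.1 hx.2)
    rw [this]; exact derivCongrOn isOpen_Ioo hW1eq hx
  have hW3eq : EqOn W3 (deriv (deriv (deriv f))) (Ioo (ρ - δ) (ρ + δ)) := fun x hx => by
    have : W3 x = deriv W2 x := derivWithin_of_mem_nhds (Icc_mem_nhds hx.1 hx.2)
    rw [this]; exact derivCongrOn isOpen_Ioo hW2eq hx
  -- honest derivatives at interior points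
  have hfd : ∀ x ∈ Ioo (ρ - δ) (ρ + δ), HasDerivAt f (deriv f x) x := fun x hx =>
    ((hsl.contDiffAt (Icc_mem_nhds hx.1 hx.2)).differentiableAt (by simp)).hasDerivAt
  have hf1cd : ContDiffOn ℝ (⊤ : ℕ∞) (deriv f) (Ioo (ρ - δ) (ρ + δ)) :=
    (hsl.mono Ioo_subset_Icc_self).deriv_of_isOpen isOpen_Ioo (by simp)
  have hf2cd : ContDiffOn ℝ (⊤ : ℕ∞) (deriv (deriv f)) (Ioo (ρ - δ) (ρ + δ)) :=
    hf1cd.deriv_of_isOpen isOpen_Ioo (by simp)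
  have hf1d : ∀ x ∈ Ioo (ρ - δ) (ρ + δ), HasDerivAt (deriv f) (deriv (deriv f) x) x :=
    fun x hx =>
    ((hf1cd.contDiffAt (isOpen_Ioo.mem_nhds hx)).differentiableAt (by simp)).hasDerivAt
  have hf2d : ∀ x ∈ Ioo (ρ - δ) (ρ + δ),
      HasDerivAt (deriv (deriv f)) (deriv (deriv (deriv f)) x) x := fun x hx =>
    ((hf2cd.contDiffAt (isOpen_Ioo.mem_nhds hx)).differentiableAt (by simp)).hasDerivAt
  -- the path
  set γ : ℝ → ℝ := fun s => ρ + s * (z - ρ) with hγdef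
  have hγc : Continuous γ := by fun_prop
  have hγmem : ∀ s ∈ Icc (0:ℝ) 1, γ s ∈ Icc (ρ - δ) (ρ + δ) := by
    intro s hs
    simp only [hγdef]
    constructor
    · nlinarith [mul_nonneg hs.1 (by linarith [hz.1] : (0:ℝ) ≤ z - (ρ - δ)),
        mul_nonneg (by linarith [hs.2] : (0:ℝ) ≤ 1 - s) hδ.le]
    · nlinarith [mul_nonneg hs.1 (by linarith [hz.2] : (0:ℝ) ≤ (ρ + δ) - z),
        mul_nonneg (by linarith [hs.2] : (0:ℝ) ≤ 1 - s) hδ.le]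
  have hγmemO : ∀ s ∈ Ico (0:ℝ) 1, γ s ∈ Ioo (ρ - δ) (ρ + δ) := by
    intro s hs
    simp only [hγdef]
    constructor
    · nlinarith [mul_nonneg hs.1 (by linarith [hz.1] : (0:ℝ) ≤ z - (ρ - δ)),
        mul_pos (by linarith [hs.2] : (0:ℝ) < 1 - s) hδ]
    · nlinarith [mul_nonneg hs.1 (by linarith [hz.2] : (0:ℝ) ≤ (ρ + δ) - z),
        mul_pos (by linarith [hs.2] : (0:ℝ) < 1 - s) hδ]
  -- auxiliary functions
  set g : ℝ → ℝ := fun s => (1 - s) ^ 2 * W3 (γ s) with hgdef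
  set u : ℝ → ℝ := fun s =>
    f (γ s) + (1 - s) * (z - ρ) * W1 (γ s) + (1 - s) ^ 2 * ((z - ρ) ^ 2 / 2) * W2 (γ s)
    with hudef
  have hgc : ContinuousOn g (Icc (0:ℝ) 1) :=
    (((continuous_const.sub continuous_id).pow 2).continuousOn).mul
      ((hW3cd.continuousOn).comp hγc.continuousOn hγmem)
  have hgInt : IntervalIntegrable g volume 0 1 := by
    have : ContinuousOn g (uIcc (0:ℝ) 1) := by rwa [uIcc_of_le zero_le_one]
    exact this.intervalIntegrable
  have huc : ContinuousOn u (Icc (0:ℝ) 1) := by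
    have c1 : ContinuousOn (fun s => f (γ s)) (Icc (0:ℝ) 1) :=
      (hsl.continuousOn).comp hγc.continuousOn hγmem
    have c2 : ContinuousOn (fun s => W1 (γ s)) (Icc (0:ℝ) 1) :=
      (hW1cd.continuousOn).comp hγc.continuousOn hγmem
    have c3 : ContinuousOn (fun s => W2 (γ s)) (Icc (0:ℝ) 1) :=
      (hW2cd.continuousOn).comp hγc.continuousOn hγmem
    exact (c1.add ((((continuous_const.sub continuous_id).mul
      continuous_const).continuousOn).mul c2)).add
      (((((continuous_const.sub continuous_id).pow 2).mul
        continuous_const).continuousOn).mul c3)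
  -- derivative of u on the interior
  have hderiv : ∀ s ∈ Ioo (0:ℝ) 1, HasDerivAt u ((z - ρ) ^ 3 / 2 * g s) s := by
    intro s hs
    have hx : γ s ∈ Ioo (ρ - δ) (ρ + δ) := hγmemO s ⟨hs.1.le, hs.2⟩
    have hγ' : HasDerivAt γ (z - ρ) s := by
      have h := ((hasDerivAt_id' s).mul_const (z - ρ)).const_add ρ; rw [one_mul] at h; exact h
    have A1 : HasDerivAt (fun s' => f (γ s')) (deriv f (γ s) * (z - ρ)) s :=
      (hfd _ hx).comp s hγ'
    have A2 : HasDerivAt (fun s' : ℝ => (1 - s') * (z - ρ)) (-(z - ρ)) s := by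
      simpa using ((hasDerivAt_const s (1:ℝ)).sub (hasDerivAt_id s)).mul_const (z - ρ)
    have A3 : HasDerivAt (fun s' => deriv f (γ s')) (deriv (deriv f) (γ s) * (z - ρ)) s :=
      (hf1d _ hx).comp s hγ'
    have A4 : HasDerivAt (fun s' : ℝ => (1 - s') ^ 2 * ((z - ρ) ^ 2 / 2))
        ((2 * (1 - s) ^ 1 * (0 - 1)) * ((z - ρ) ^ 2 / 2)) s :=
      (((hasDerivAt_const s (1:ℝ)).sub (hasDerivAt_id s)).pow 2).mul_const _
    have A5 : HasDerivAt (fun s' => deriv (deriv f) (γ s'))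
        (deriv (deriv (deriv f)) (γ s) * (z - ρ)) s := (hf2d _ hx).comp s hγ'
    have htot : HasDerivAt (fun s' =>
        f (γ s') + (1 - s') * (z - ρ) * deriv f (γ s') +
          (1 - s') ^ 2 * ((z - ρ) ^ 2 / 2) * deriv (deriv f) (γ s'))
        (deriv f (γ s) * (z - ρ) +
          (-(z - ρ) * deriv f (γ s) + (1 - s) * (z - ρ) * (deriv (deriv f) (γ s) * (z - ρ))) +
          ((2 * (1 - s) ^ 1 * (0 - 1)) * ((z - ρ) ^ 2 / 2) * deriv (deriv f) (γ s) +
            (1 - s) ^ 2 * ((z - ρ) ^ 2 / 2) * (deriv (deriv (deriv f)) (γ s) * (z - ρ)))) s :=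
      (A1.add (A2.mul A3)).add (A4.mul A5)
    have hO : IsOpen (γ ⁻¹' Ioo (ρ - δ) (ρ + δ)) := isOpen_Ioo.preimage hγc
    have hueq : u =ᶠ[𝓝 s] (fun s' =>
        f (γ s') + (1 - s') * (z - ρ) * deriv f (γ s') +
          (1 - s') ^ 2 * ((z - ρ) ^ 2 / 2) * deriv (deriv f) (γ s')) := by
      refine Filter.eventuallyEq_of_mem (hO.mem_nhds hx) ?_
      intro s' hs'
      simp only [u, hW1eq hs', hW2eq hs']
    have hu' : HasDerivAt u (deriv f (γ s) * (z - ρ) +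
          (-(z - ρ) * deriv f (γ s) + (1 - s) * (z - ρ) * (deriv (deriv f) (γ s) * (z - ρ))) +
          ((2 * (1 - s) ^ 1 * (0 - 1)) * ((z - ρ) ^ 2 / 2) * deriv (deriv f) (γ s) +
            (1 - s) ^ 2 * ((z - ρ) ^ 2 / 2) * (deriv (deriv (deriv f)) (γ s) * (z - ρ)))) s :=
      htot.congr_of_eventuallyEq hueq
    have hval : deriv f (γ s) * (z - ρ) +
          (-(z - ρ) * deriv f (γ s) + (1 - s) * (z - ρ) * (deriv (deriv f) (γ s) * (z - ρ))) +
          ((2 * (1 - s) ^ 1 * (0 - 1)) * ((z - ρ) ^ 2 / 2) * deriv (deriv f) (γ s) +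
            (1 - s) ^ 2 * ((z - ρ) ^ 2 / 2) * (deriv (deriv (deriv f)) (γ s) * (z - ρ)))
        = (z - ρ) ^ 3 / 2 * g s := by
      simp only [g, hW3eq hx]
      ring
    rw [hval] at hu'
    exact hu'
  -- FTC
  have hGInt : IntervalIntegrable (fun s => (z - ρ) ^ 3 / 2 * g s) volume 0 1 :=
    hgInt.const_mul _
  have hFTC : (∫ s in (0:ℝ)..1, (z - ρ) ^ 3 / 2 * g s) = u 1 - u 0 :=
    intervalIntegral.integral_eq_sub_of_hasDeriv_right_of_le zero_le_one huc
      (fun s hs => ((hderiv s hs).hasDerivWithinAt)) hGInt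
  have hγ1 : γ 1 = z := by simp [hγdef]
  have hγ0 : γ 0 = ρ := by simp [hγdef]
  have hu1 : u 1 = f z := by
    simp only [u, hγ1]
    norm_num
  have hu0 : u 0 = 0 := by
    have e1 : W1 ρ = 0 := by rw [hW1eq hρJ]; exact h1 t ht
    have e2 : W2 ρ = 0 := by rw [hW2eq hρJ]; exact h2 t ht
    have e0 : f ρ = 0 := h0 t ht
    simp only [u, hγ0, e0, e1, e2]
    ring
  -- identify the statement integral with ∫ g
  have hcongrInt : (∫ s in (0:ℝ)..1,
      (1 - s) ^ 2 * deriv (deriv (deriv (φ t))) (ρ + s * (z - ρ))) = ∫ s in (0:ℝ)..1, g s := by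
    refine intervalIntegral.integral_congr ?_
    intro s hs
    rw [uIcc_of_le zero_le_one] at hs
    by_cases hs1 : s = 1
    · subst hs1; simp [hgdef]
    · have hsIco : s ∈ Ico (0:ℝ) 1 := ⟨hs.1, lt_of_le_of_ne hs.2 hs1⟩
      have hxI : γ s ∈ Ioo (ρ - δ) (ρ + δ) := hγmemO s hsIco
      simp only [g, hW3eq hxI]; rfl
  have hXeq : Xfun φ ρ t z = (1/2) * ∫ s in (0:ℝ)..1, g s := by
    rw [Xfun, hcongrInt]
  have hIg : ((z - ρ) ^ 3 / 2) * (∫ s in (0:ℝ)..1, g s) = f z := by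
    rw [← intervalIntegral.integral_const_mul, hFTC, hu1, hu0, sub_zero]
  constructor
  · rw [hXeq]
    calc (z - ρ) ^ 3 * ((1/2) * ∫ s in (0:ℝ)..1, g s)
        = ((z - ρ) ^ 3 / 2) * (∫ s in (0:ℝ)..1, g s) := by ring
      _ = f z := hIg
  · rw [hXeq]
    have hpos : 0 < ∫ s in (0:ℝ)..1, g s := by
      refine intervalIntegral.intervalIntegral_pos_of_pos_on hgInt ?_ zero_lt_one
      intro s hs
      have hxI : γ s ∈ Ioo (ρ - δ) (ρ + δ) := hγmemO s ⟨hs.1.le, hs.2⟩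
      have hxJ : γ s ∈ Icc (ρ - δ) (ρ + δ) := Ioo_subset_Icc_self hxI
      have := h3 t ht (γ s) hxJ
      have h1s : (0:ℝ) < (1 - s) ^ 2 := pow_pos (by linarith [hs.2]) 2
      calc (0:ℝ) < (1 - s) ^ 2 * deriv (deriv (deriv f)) (γ s) := mul_pos h1s this
        _ = g s := by rw [hgdef]; simp [hW3eq hxI]
    linarith

noncomputable def Lmap (ρ s : ℝ) (q : ℝ × ℝ) : ℝ × ℝ := (q.1, ρ + s * (q.2 - ρ))

noncomputable def Amap (s : ℝ) : ℝ × ℝ →L[ℝ] ℝ × ℝ :=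
  (ContinuousLinearMap.fst ℝ ℝ ℝ).prod (0 : ℝ × ℝ →L[ℝ] ℝ) +
    s • (0 : ℝ × ℝ →L[ℝ] ℝ).prod (ContinuousLinearMap.snd ℝ ℝ ℝ)

lemma Amap_apply (s : ℝ) (y : ℝ × ℝ) : Amap s y = (y.1, s * y.2) := by
  simp [Amap, Prod.ext_iff]

lemma Amap_cont : Continuous Amap := continuous_const.add (continuous_id.smul continuous_const)

lemma Amap_norm (s : ℝ) (hs : s ∈ Icc (0:ℝ) 1) (y : ℝ × ℝ) : ‖Amap s y‖ ≤ ‖y‖ := by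
  rw [Amap_apply, Prod.norm_def]
  refine max_le ((le_max_left _ _).trans_eq (Prod.norm_def y).symm) ?_
  have : ‖s * y.2‖ ≤ ‖y.2‖ := by
    rw [norm_mul]
    have : ‖s‖ ≤ 1 := by rw [Real.norm_eq_abs, abs_le]; constructor <;> linarith [hs.1, hs.2]
    nlinarith [norm_nonneg y.2, norm_nonneg s]
  exact this.trans ((le_max_right _ _).trans_eq (Prod.norm_def y).symm)

lemma Lmap_sub (ρ s : ℝ) (x y : ℝ × ℝ) : Lmap ρ s y - Lmap ρ s x = Amap s (y - x) := by
  rw [Amap_apply]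
  simp only [Lmap]
  ext <;> simp <;> ring

noncomputable def Lam' {E F : Type} [NormedAddCommGroup E] [NormedSpace ℝ E]
    [NormedAddCommGroup F] [NormedSpace ℝ F] (Λ : ℝ → E →L[ℝ] F) (s : ℝ) :
    (ℝ × ℝ →L[ℝ] E) →L[ℝ] (ℝ × ℝ →L[ℝ] F) :=
  ((ContinuousLinearMap.compL ℝ (ℝ × ℝ) E F) (Λ s)).comp
    ((ContinuousLinearMap.compL ℝ (ℝ × ℝ) (ℝ × ℝ) E).flip (Amap s))

lemma Lam'_apply {E F : Type} [NormedAddCommGroup E] [NormedSpace ℝ E]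
    [NormedAddCommGroup F] [NormedSpace ℝ F] (Λ : ℝ → E →L[ℝ] F) (s : ℝ)
    (M : ℝ × ℝ →L[ℝ] E) (v : ℝ × ℝ) : Lam' Λ s M v = Λ s (M (Amap s v)) := rfl

lemma Lam'_cont {E F : Type} [NormedAddCommGroup E] [NormedSpace ℝ E]
    [NormedAddCommGroup F] [NormedSpace ℝ F] (Λ : ℝ → E →L[ℝ] F) (hΛ : Continuous Λ) :
    Continuous (Lam' Λ) := by
  unfold Lam'
  exact ((ContinuousLinearMap.compL ℝ (ℝ × ℝ) E F).continuous.comp hΛ).clm_comp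
    ((ContinuousLinearMap.compL ℝ (ℝ × ℝ) (ℝ × ℝ) E).flip.continuous.comp Amap_cont)

lemma param_hasFDeriv {E F : Type} [NormedAddCommGroup E] [NormedSpace ℝ E]
    [NormedAddCommGroup F] [NormedSpace ℝ F] [CompleteSpace F]
    (S : Set (ℝ × ℝ)) (ρ : ℝ) (hSc : Convex ℝ S) (hSk : IsCompact S) (hSu : UniqueDiffOn ℝ S)
    (hL : ∀ s ∈ Icc (0:ℝ) 1, ∀ q ∈ S, Lmap ρ s q ∈ S)
    (G : ℝ × ℝ → E) (hG : ContDiffOn ℝ 1 G S) (Λ : ℝ → E →L[ℝ] F) (hΛ : Continuous Λ)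
    (x : ℝ × ℝ) (hx : x ∈ S) :
    HasFDerivWithinAt (fun q => ∫ s in (0:ℝ)..1, Λ s (G (Lmap ρ s q)))
      (∫ s in (0:ℝ)..1, Lam' Λ s (fderivWithin ℝ G S (Lmap ρ s x))) S x := by
  have hGc : ContinuousOn G S := hG.continuousOn
  have hDc : ContinuousOn (fderivWithin ℝ G S) S := hG.continuousOn_fderivWithin hSu le_rfl
  have hGd : ∀ w ∈ S, HasFDerivWithinAt G (fderivWithin ℝ G S w) S w := fun w hw =>
    ((hG.differentiableOn one_ne_zero) w hw).hasFDerivWithinAt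
  have hLc : ∀ q, Continuous fun s : ℝ => Lmap ρ s q := fun q => by unfold Lmap; fun_prop
  have hint1 : ∀ q ∈ S, IntervalIntegrable (fun s => Λ s (G (Lmap ρ s q))) volume 0 1 := by
    intro q hq
    have : ContinuousOn (fun s => Λ s (G (Lmap ρ s q))) (uIcc (0:ℝ) 1) := by
      rw [uIcc_of_le zero_le_one]
      exact hΛ.continuousOn.clm_apply (hGc.comp (hLc q).continuousOn fun s hs => hL s hs q hq)
    exact this.intervalIntegrable
  have hc2 : ContinuousOn (fun s => Lam' Λ s (fderivWithin ℝ G S (Lmap ρ s x))) (uIcc (0:ℝ) 1) := by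
    rw [uIcc_of_le zero_le_one]
    exact (Lam'_cont Λ hΛ).continuousOn.clm_apply
      (hDc.comp (hLc x).continuousOn fun s hs => hL s hs x hx)
  have hint2 := hc2.intervalIntegrable (μ := volume)
  obtain ⟨CΛ, hCΛ⟩ := (isCompact_Icc (a := (0:ℝ)) (b := 1)).exists_bound_of_continuousOn
    hΛ.continuousOn
  have hCΛ0 : 0 ≤ CΛ := le_trans (norm_nonneg _) (hCΛ 0 (by norm_num))
  have hUC := hSk.uniformContinuousOn_of_continuous hDc
  rw [Metric.uniformContinuousOn_iff] at hUC
  rw [hasFDerivWithinAt_iff_isLittleO, Asymptotics.isLittleO_iff]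
  intro c hc
  set ε := c / (CΛ + 1) with hε
  have hε0 : 0 < ε := div_pos hc (by linarith)
  have hε1 : ε * (CΛ + 1) = c := by rw [hε]; field_simp
  obtain ⟨η, hη0, hη⟩ := hUC ε hε0
  have hev : ∀ᶠ y in 𝓝[S] x, y ∈ S ∩ Metric.ball x η :=
    Filter.inter_mem self_mem_nhdsWithin (mem_nhdsWithin_of_mem_nhds (Metric.ball_mem_nhds x hη0))
  filter_upwards [hev] with y hy
  obtain ⟨hyS, hyB⟩ := hy
  have hyx : ‖y - x‖ < η := by rw [← dist_eq_norm]; exact hyB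
  have key : ∀ s ∈ Icc (0:ℝ) 1, ‖G (Lmap ρ s y) - G (Lmap ρ s x) -
      fderivWithin ℝ G S (Lmap ρ s x) (Amap s (y - x))‖ ≤ ε * ‖y - x‖ := by
    intro s hs
    have hxs := hL s hs x hx
    have hys := hL s hs y hyS
    have hsub := Lmap_sub ρ s x y
    have hA := Amap_norm s hs (y - x)
    have hyB' : Lmap ρ s y ∈ S ∩ Metric.ball (Lmap ρ s x) η := by
      refine ⟨hys, ?_⟩
      rw [Metric.mem_ball, dist_eq_norm, hsub]; linarith
    have := (hSc.inter (convex_ball (Lmap ρ s x) η)).norm_image_sub_le_of_norm_hasFDerivWithin_le'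
      (f := G) (f' := fderivWithin ℝ G S) (φ := fderivWithin ℝ G S (Lmap ρ s x)) (C := ε)
      (fun w hw => (hGd w hw.1).mono inter_subset_left)
      (fun w hw => by
        rw [← dist_eq_norm]; exact (hη w hw.1 _ hxs (Metric.mem_ball.1 hw.2)).le)
      ⟨hxs, Metric.mem_ball_self hη0⟩ hyB'
    rw [hsub] at this
    calc _ ≤ ε * ‖Amap s (y - x)‖ := this
      _ ≤ ε * ‖y - x‖ := mul_le_mul_of_nonneg_left hA hε0.le
  have hc3 : ContinuousOn (fun s => Lam' Λ s (fderivWithin ℝ G S (Lmap ρ s x)) (y - x))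
      (uIcc (0:ℝ) 1) := hc2.clm_apply continuousOn_const
  have heq : (∫ s in (0:ℝ)..1, Λ s (G (Lmap ρ s y))) - (∫ s in (0:ℝ)..1, Λ s (G (Lmap ρ s x)))
      - (∫ s in (0:ℝ)..1, Lam' Λ s (fderivWithin ℝ G S (Lmap ρ s x))) (y - x)
      = ∫ s in (0:ℝ)..1, Λ s (G (Lmap ρ s y) - G (Lmap ρ s x) -
          fderivWithin ℝ G S (Lmap ρ s x) (Amap s (y - x))) := by
    rw [ContinuousLinearMap.intervalIntegral_apply hint2,
      ← intervalIntegral.integral_sub (hint1 y hyS) (hint1 x hx),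
      ← intervalIntegral.integral_sub ((hint1 y hyS).sub (hint1 x hx)) hc3.intervalIntegrable]
    refine intervalIntegral.integral_congr fun s _ => ?_
    simp only [Lam'_apply, map_sub]
  rw [heq]
  have hb := intervalIntegral.norm_integral_le_of_norm_le_const (a := 0) (b := 1)
    (C := CΛ * (ε * ‖y - x‖))
    (f := fun s => Λ s (G (Lmap ρ s y) - G (Lmap ρ s x) -
          fderivWithin ℝ G S (Lmap ρ s x) (Amap s (y - x)))) (fun s hs => by
      rw [uIoc_of_le zero_le_one] at hs
      have hs' := Ioc_subset_Icc_self hs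
      exact ((Λ s).le_opNorm _).trans (mul_le_mul (hCΛ s hs') (key s hs') (norm_nonneg _) hCΛ0))
  rw [sub_zero, abs_one, mul_one] at hb
  have hfin : CΛ * (ε * ‖y - x‖) ≤ c * ‖y - x‖ := by
    have : CΛ * ε ≤ c := by nlinarith
    nlinarith [norm_nonneg (y - x)]
  exact hb.trans hfin

lemma param_contDiff (S : Set (ℝ × ℝ)) (ρ : ℝ) (hSc : Convex ℝ S) (hSk : IsCompact S)
    (hSu : UniqueDiffOn ℝ S) (hL : ∀ s ∈ Icc (0:ℝ) 1, ∀ q ∈ S, Lmap ρ s q ∈ S) (m : ℕ) :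
    ∀ {E F : Type} [NormedAddCommGroup E] [NormedSpace ℝ E] [NormedAddCommGroup F]
      [NormedSpace ℝ F] [CompleteSpace F] (G : ℝ × ℝ → E) (Λ : ℝ → E →L[ℝ] F),
      ContDiffOn ℝ (⊤ : ℕ∞) G S → Continuous Λ →
      ContDiffOn ℝ m (fun q => ∫ s in (0:ℝ)..1, Λ s (G (Lmap ρ s q))) S := by
  induction m with
  | zero =>
    intro E F _ _ _ _ _ G Λ hG hΛ
    refine contDiffOn_zero.2 ?_
    exact fun x hx => (param_hasFDeriv S ρ hSc hSk hSu hL G (hG.of_le (by simp)) Λ hΛ x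
      hx).continuousWithinAt
  | succ m ih =>
    intro E F _ _ _ _ _ G Λ hG hΛ
    have hD := fun x hx => param_hasFDeriv S ρ hSc hSk hSu hL G (hG.of_le (by simp)) Λ hΛ x hx
    rw [show ((m + 1 : ℕ) : WithTop ℕ∞) = (m : WithTop ℕ∞) + 1 by push_cast; rfl]
    rw [contDiffOn_succ_iff_fderivWithin hSu]
    refine ⟨fun x hx => (hD x hx).differentiableWithinAt, fun h => absurd h (by simp), ?_⟩
    have hG' : ContDiffOn ℝ (⊤ : ℕ∞) (fderivWithin ℝ G S) S := hG.fderivWithin hSu (by simp)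
    refine (ih (fderivWithin ℝ G S) (Lam' Λ) hG' (Lam'_cont Λ hΛ)).congr fun x hx => ?_
    exact (hD x hx).fderivWithin (hSu x hx)

noncomputable def DzOp (S : Set (ℝ × ℝ)) (H : ℝ × ℝ → ℝ) (q : ℝ × ℝ) : ℝ :=
  fderivWithin ℝ H S q ((0:ℝ), (1:ℝ))

lemma DzOp_smooth (S : Set (ℝ × ℝ)) (hSu : UniqueDiffOn ℝ S) (H : ℝ × ℝ → ℝ)
    (hH : ContDiffOn ℝ (⊤ : ℕ∞) H S) : ContDiffOn ℝ (⊤ : ℕ∞) (DzOp S H) S :=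
  (hH.fderivWithin hSu (by simp)).clm_apply contDiffOn_const

lemma DzOp_deriv (a b c d : ℝ) (H : ℝ × ℝ → ℝ)
    (hH : ContDiffOn ℝ (⊤ : ℕ∞) H (Icc a b ×ˢ Icc c d)) (t : ℝ) (ht : t ∈ Icc a b) (z : ℝ)
    (hz : z ∈ Ioo c d) :
    HasDerivAt (fun z => H (t, z)) (DzOp (Icc a b ×ˢ Icc c d) H (t, z)) z := by
  have hd : HasFDerivWithinAt H (fderivWithin ℝ H (Icc a b ×ˢ Icc c d) (t, z))
      (Icc a b ×ˢ Icc c d) (t, z) :=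
    ((hH.differentiableOn (by simp)) (t, z) ⟨ht, Ioo_subset_Icc_self hz⟩).hasFDerivWithinAt
  have hι : HasDerivWithinAt (fun z' : ℝ => (t, z')) ((0:ℝ), (1:ℝ)) (Ioo c d) z :=
    ((hasDerivAt_const z t).prodMk (hasDerivAt_id z)).hasDerivWithinAt
  have := hd.comp_hasDerivWithinAt z hι (fun z' hz' => ⟨ht, Ioo_subset_Icc_self hz'⟩)
  exact this.hasDerivAt (Ioo_mem_nhds hz.1 hz.2)

theorem Xfun_smooth (a b ρ δ : ℝ) (hab : a < b) (hδ : 0 < δ) (φ : ℝ → ℝ → ℝ)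
    (hφ : ContDiffOn ℝ (⊤ : ℕ∞) (Function.uncurry φ) (Icc a b ×ˢ Icc (ρ - δ) (ρ + δ))) :
    ContDiffOn ℝ (⊤ : ℕ∞) (fun q : ℝ × ℝ => Xfun φ ρ q.1 q.2)
      (Icc a b ×ˢ Icc (ρ - δ) (ρ + δ)) := by
  have hcd : ρ - δ < ρ + δ := by linarith
  have hSu : UniqueDiffOn ℝ (Icc a b ×ˢ Icc (ρ - δ) (ρ + δ)) :=
    (uniqueDiffOn_Icc hab).prod (uniqueDiffOn_Icc hcd)
  have hSc : Convex ℝ (Icc a b ×ˢ Icc (ρ - δ) (ρ + δ)) := (convex_Icc _ _).prod (convex_Icc _ _)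
  have hSk : IsCompact (Icc a b ×ˢ Icc (ρ - δ) (ρ + δ)) := isCompact_Icc.prod isCompact_Icc
  have hL : ∀ s ∈ Icc (0:ℝ) 1, ∀ q ∈ Icc a b ×ˢ Icc (ρ - δ) (ρ + δ),
      Lmap ρ s q ∈ Icc a b ×ˢ Icc (ρ - δ) (ρ + δ) := by
    intro s hs q hq
    refine ⟨hq.1, ?_⟩
    have hz := hq.2
    simp only [Lmap]
    constructor
    · nlinarith [mul_nonneg hs.1 (by linarith [hz.1] : (0:ℝ) ≤ q.2 - (ρ - δ)),
        mul_nonneg (by linarith [hs.2] : (0:ℝ) ≤ 1 - s) hδ.le]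
    · nlinarith [mul_nonneg hs.1 (by linarith [hz.2] : (0:ℝ) ≤ (ρ + δ) - q.2),
        mul_nonneg (by linarith [hs.2] : (0:ℝ) ≤ 1 - s) hδ.le]
  have hG1 := DzOp_smooth _ hSu _ hφ
  have hG2 := DzOp_smooth _ hSu _ hG1
  have hG3 := DzOp_smooth _ hSu _ hG2
  set Λ : ℝ → ℝ →L[ℝ] ℝ := fun s => ((1/2) * (1 - s) ^ 2) • ContinuousLinearMap.id ℝ ℝ with hΛdef
  have hΛ : Continuous Λ :=
    (by fun_prop : Continuous fun s : ℝ => (1/2) * (1 - s) ^ 2).smul continuous_const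
  have hK := contDiffOn_infty.2 fun m => param_contDiff _ ρ hSc hSk hSu hL m _ Λ hG3 hΛ
  refine hK.congr fun q hq => ?_
  have e1 : EqOn (deriv (φ q.1))
      (fun z => DzOp (Icc a b ×ˢ Icc (ρ - δ) (ρ + δ)) (Function.uncurry φ) (q.1, z))
      (Ioo (ρ - δ) (ρ + δ)) := fun z hz =>
    (DzOp_deriv a b _ _ _ hφ q.1 hq.1 z hz).deriv
  have e2 : EqOn (deriv (deriv (φ q.1)))
      (fun z => DzOp (Icc a b ×ˢ Icc (ρ - δ) (ρ + δ))
        (DzOp (Icc a b ×ˢ Icc (ρ - δ) (ρ + δ)) (Function.uncurry φ)) (q.1, z))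
      (Ioo (ρ - δ) (ρ + δ)) := fun z hz => by
    rw [derivCongrOn isOpen_Ioo e1 hz]; exact (DzOp_deriv a b _ _ _ hG1 q.1 hq.1 z hz).deriv
  have e3 : EqOn (deriv (deriv (deriv (φ q.1))))
      (fun z => DzOp (Icc a b ×ˢ Icc (ρ - δ) (ρ + δ)) (DzOp (Icc a b ×ˢ Icc (ρ - δ) (ρ + δ))
        (DzOp (Icc a b ×ˢ Icc (ρ - δ) (ρ + δ)) (Function.uncurry φ))) (q.1, z))
      (Ioo (ρ - δ) (ρ + δ)) := fun z hz => by
    rw [derivCongrOn isOpen_Ioo e2 hz]; exact (DzOp_deriv a b _ _ _ hG2 q.1 hq.1 z hz).deriv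
  simp only [Xfun]
  rw [← intervalIntegral.integral_const_mul]
  refine intervalIntegral.integral_congr fun s hs => ?_
  rw [uIcc_of_le zero_le_one] at hs
  by_cases hs1 : s = 1
  · subst hs1; simp [Λ]
  · have hz := hq.2
    have hsI : s ∈ Ico (0:ℝ) 1 := ⟨hs.1, lt_of_le_of_ne hs.2 hs1⟩
    have hmem : ρ + s * (q.2 - ρ) ∈ Ioo (ρ - δ) (ρ + δ) := by
      constructor
      · nlinarith [mul_nonneg hsI.1 (by linarith [hz.1] : (0:ℝ) ≤ q.2 - (ρ - δ)),
          mul_pos (by linarith [hsI.2] : (0:ℝ) < 1 - s) hδ]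
      · nlinarith [mul_nonneg hsI.1 (by linarith [hz.2] : (0:ℝ) ≤ (ρ + δ) - q.2),
          mul_pos (by linarith [hsI.2] : (0:ℝ) < 1 - s) hδ]
    simp only [Λ, Lmap, ContinuousLinearMap.smul_apply, ContinuousLinearMap.id_apply, smul_eq_mul]
    rw [e3 hmem]; ring

theorem stmt6 (a b ρ δ : ℝ) (hab : a ≤ b) (hδ : 0 < δ)
    (φ : ℝ → ℝ → ℝ)
    (hφ : ContDiffOn ℝ (⊤ : ℕ∞) (Function.uncurry φ) (Icc a b ×ˢ Icc (ρ - δ) (ρ + δ)))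
    (h0 : ∀ t ∈ Icc a b, φ t ρ = 0)
    (h1 : ∀ t ∈ Icc a b, deriv (φ t) ρ = 0)
    (h2 : ∀ t ∈ Icc a b, deriv (deriv (φ t)) ρ = 0)
    (h3 : ∀ t ∈ Icc a b, ∀ z ∈ Icc (ρ - δ) (ρ + δ),
      0 < deriv (deriv (deriv (φ t))) z) :
    let ψ : ℝ → ℝ → ℝ := fun t z => (z - ρ) *
      ((1/2) * ∫ s in (0:ℝ)..1,
        (1 - s) ^ 2 * deriv (deriv (deriv (φ t))) (ρ + s * (z - ρ))) ^ ((1:ℝ)/3)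
    ContDiffOn ℝ (⊤ : ℕ∞) (Function.uncurry ψ) (Icc a b ×ˢ Icc (ρ - δ) (ρ + δ)) ∧
      ∀ t ∈ Icc a b, ∀ z ∈ Icc (ρ - δ) (ρ + δ), ψ t z ^ 3 = φ t z := by
  intro ψ
  have hψ : Function.uncurry ψ =
      (fun q : ℝ × ℝ => (q.2 - ρ) * Xfun φ ρ q.1 q.2 ^ ((1:ℝ)/3)) := rfl
  have hXsm : ContDiffOn ℝ (⊤ : ℕ∞) (fun q : ℝ × ℝ => Xfun φ ρ q.1 q.2)
      (Icc a b ×ˢ Icc (ρ - δ) (ρ + δ)) := by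
    rcases hab.lt_or_eq with hlt | heq
    · exact Xfun_smooth a b ρ δ hlt hδ φ hφ
    · subst heq
      set φ' : ℝ → ℝ → ℝ := fun _ z => φ a z with hφ'
      have hφ'cd : ContDiffOn ℝ (⊤ : ℕ∞) (Function.uncurry φ')
          (Icc a (a + 1) ×ˢ Icc (ρ - δ) (ρ + δ)) :=
        hφ.comp (contDiffOn_const.prodMk contDiffOn_snd)
          (fun q hq => ⟨left_mem_Icc.2 le_rfl, hq.2⟩)
      refine ((Xfun_smooth a (a + 1) ρ δ (by linarith) hδ φ' hφ'cd).mono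
        (prod_mono (Icc_subset_Icc le_rfl (by linarith)) le_rfl)).congr fun q hq => ?_
      have : q.1 = a := le_antisymm hq.1.2 hq.1.1
      rw [this]
      rfl
  constructor
  · rw [hψ]
    have hpos : ∀ q ∈ Icc a b ×ˢ Icc (ρ - δ) (ρ + δ), Xfun φ ρ q.1 q.2 ≠ 0 := fun q hq =>
      (stmt6_taylor a b ρ δ hδ φ hφ h0 h1 h2 h3 q.1 hq.1 q.2 hq.2).2.ne'
    exact (contDiffOn_snd.sub contDiffOn_const).mul (hXsm.rpow_const_of_ne hpos)
  · intro t ht z hz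
    obtain ⟨hkey, hpos⟩ := stmt6_taylor a b ρ δ hδ φ hφ h0 h1 h2 h3 t ht z hz
    have hψz : ψ t z = (z - ρ) * Xfun φ ρ t z ^ ((1:ℝ)/3) := rfl
    rw [hψz, mul_pow, ← hkey]
    congr 1
    rw [← Real.rpow_natCast (Xfun φ ρ t z ^ ((1:ℝ)/3)) 3, ← Real.rpow_mul hpos.le]
    norm_num
end
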